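/- Identification up to the stated restrictions: if F Γᵀ = F̃ Γ̃ᵀ where F, F̃ ∈ ℝ^{T×r} satisfy (1/T)FᵀF = (1/T)F̃ᵀF̃ = I_r, and ΓᵀΓ, Γ̃ᵀΓ̃ are both diagonal with strictly decreasing positive distinct diagonal entries, then there exists a diagonal matrix S with diagonal entries ±1 such that F̃ = F S and Γ̃ = Γ S. -/
import Mathlib

open Matrix

lemma fin_strictMono_id {n : ℕ} {f : Fin n → Fin n} (hf : StrictMono f) : f = id := by
  haveI : WellFoundedLT (Fin n) := inferInstance
  have hbij : Function.Bijective f := Finite.injective_iff_bijective.1 hf.injective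
  have hrange : Set.range f = Set.range (id : Fin n → Fin n) := by
    rw [Set.range_id]; exact Set.range_eq_univ.2 hbij.surjective
  exact (StrictMono.range_inj hf (strictMono_id : StrictMono (id : Fin n → Fin n))).1 hrange

theorem factor_identification_up_to_sign (T M r : ℕ) (hT : 0 < T) (hr1 : r ≤ T) (hr2 : r ≤ M)
    (F F' : Matrix (Fin T) (Fin r) ℝ) (Γ Γ' : Matrix (Fin M) (Fin r) ℝ)
    (hF : ((T : ℝ)⁻¹) • (Fᵀ * F) = 1)
    (hF' : ((T : ℝ)⁻¹) • (F'ᵀ * F') = 1)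
    (v v' : Fin r → ℝ)
    (hΓ : Γᵀ * Γ = Matrix.diagonal v)
    (hΓ' : Γ'ᵀ * Γ' = Matrix.diagonal v')
    (hvpos : ∀ k, 0 < v k) (hvpos' : ∀ k, 0 < v' k)
    (hvdec : ∀ k l : Fin r, k < l → v l < v k)
    (hvdec' : ∀ k l : Fin r, k < l → v' l < v' k)
    (hrank : Γ.rank = r)
    (heq : F * Γᵀ = F' * Γ'ᵀ) :
    ∃ S : Matrix (Fin r) (Fin r) ℝ,
      (∀ i j : Fin r, i ≠ j → S i j = 0) ∧
      (∀ i : Fin r, S i i = 1 ∨ S i i = -1) ∧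
      F' = F * S ∧ Γ' = Γ * S := by
  have hTne : (T : ℝ) ≠ 0 := Nat.cast_ne_zero.2 hT.ne'
  -- normalize hF, hF'
  have hFn : Fᵀ * F = (T : ℝ) • 1 := by
    have := congrArg (fun X => (T : ℝ) • X) hF
    simpa [smul_smul, mul_inv_cancel₀ hTne] using this
  have hF'n : F'ᵀ * F' = (T : ℝ) • 1 := by
    have := congrArg (fun X => (T : ℝ) • X) hF'
    simpa [smul_smul, mul_inv_cancel₀ hTne] using this
  -- D and its inverse
  set D : Matrix (Fin r) (Fin r) ℝ := Matrix.diagonal v with hD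
  have hvne : ∀ k, v k ≠ 0 := fun k => (hvpos k).ne'
  have hDinv : D * Matrix.diagonal (fun k => (v k)⁻¹) = 1 := by
    rw [hD, Matrix.diagonal_mul_diagonal]
    simp [mul_inv_cancel₀, hvne]
  set A : Matrix (Fin r) (Fin r) ℝ := Γ'ᵀ * Γ * Matrix.diagonal (fun k => (v k)⁻¹) with hA
  -- F = F' * A
  have hFD : F * D = F' * (Γ'ᵀ * Γ) := by
    calc F * D = F * (Γᵀ * Γ) := by rw [hΓ]
    _ = F * Γᵀ * Γ := by rw [Matrix.mul_assoc]
    _ = F' * Γ'ᵀ * Γ := by rw [heq]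
    _ = F' * (Γ'ᵀ * Γ) := by rw [Matrix.mul_assoc]
  have hFA : F = F' * A := by
    calc F = F * (D * Matrix.diagonal (fun k => (v k)⁻¹)) := by rw [hDinv, Matrix.mul_one]
    _ = (F * D) * Matrix.diagonal (fun k => (v k)⁻¹) := by rw [Matrix.mul_assoc]
    _ = F' * (Γ'ᵀ * Γ) * Matrix.diagonal (fun k => (v k)⁻¹) := by rw [hFD]
    _ = F' * A := by rw [hA, Matrix.mul_assoc, Matrix.mul_assoc]
  -- AᵀA = 1
  have hAtA : Aᵀ * A = 1 := by
    have h1 : (T : ℝ) • (1 : Matrix (Fin r) (Fin r) ℝ) = (T : ℝ) • (Aᵀ * A) := by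
      calc (T : ℝ) • (1 : Matrix (Fin r) (Fin r) ℝ) = Fᵀ * F := hFn.symm
      _ = (F' * A)ᵀ * (F' * A) := by rw [← hFA]
      _ = Aᵀ * (F'ᵀ * F') * A := by rw [Matrix.transpose_mul, Matrix.mul_assoc, Matrix.mul_assoc, Matrix.mul_assoc]
      _ = Aᵀ * ((T : ℝ) • 1) * A := by rw [hF'n]
      _ = (T : ℝ) • (Aᵀ * A) := by rw [Matrix.mul_smul, Matrix.mul_one, Matrix.smul_mul]
    exact (smul_right_injective _ hTne h1).symm
  have hAAt : A * Aᵀ = 1 := mul_eq_one_comm.1 hAtA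
  -- cancel F'
  have hcancel : ∀ X Y : Matrix (Fin r) (Fin M) ℝ, F' * X = F' * Y → X = Y := by
    intro X Y h
    have h2 : F'ᵀ * (F' * X) = F'ᵀ * (F' * Y) := by rw [h]
    rw [← Matrix.mul_assoc, ← Matrix.mul_assoc, hF'n, Matrix.smul_mul, Matrix.smul_mul,
      Matrix.one_mul, Matrix.one_mul] at h2
    exact smul_right_injective _ hTne h2
  -- Γ'ᵀ = A * Γᵀ
  have hΓA : Γ'ᵀ = A * Γᵀ := by
    apply hcancel
    rw [← heq, hFA, Matrix.mul_assoc]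
  -- D' = A * D * Aᵀ, so diagonal v' * A = A * D
  have hDA : Matrix.diagonal v' * A = A * D := by
    have hΓ'A : Γ' = Γ * Aᵀ := by
      have h := congrArg Matrix.transpose hΓA
      simpa [Matrix.transpose_mul] using h
    have hD' : Matrix.diagonal v' = A * D * Aᵀ := by
      calc Matrix.diagonal v' = Γ'ᵀ * Γ' := hΓ'.symm
      _ = (A * Γᵀ) * (Γ * Aᵀ) := by rw [hΓA, hΓ'A]
      _ = A * (Γᵀ * Γ) * Aᵀ := by
          rw [Matrix.mul_assoc A Γᵀ (Γ * Aᵀ), ← Matrix.mul_assoc Γᵀ Γ Aᵀ,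
            ← Matrix.mul_assoc A (Γᵀ * Γ) Aᵀ]
      _ = A * D * Aᵀ := by rw [hΓ]
    calc Matrix.diagonal v' * A = A * D * Aᵀ * A := by rw [hD']
    _ = A * D * (Aᵀ * A) := by rw [Matrix.mul_assoc]
    _ = A * D := by rw [hAtA, Matrix.mul_one]
  -- entrywise
  have hentry : ∀ i j, A i j ≠ 0 → v' i = v j := by
    intro i j h
    have := congrFun (congrFun hDA i) j
    rw [Matrix.diagonal_mul, Matrix.mul_diagonal] at this
    have : (v' i - v j) * A i j = 0 := by ring_nf; linarith [this]
    rcases mul_eq_zero.1 this with h1 | h1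
    · linarith [sub_eq_zero.1 h1]
    · exact absurd h1 h
  -- v strict anti ⇒ injective-ish
  have hvinj : ∀ a b : Fin r, v a = v b → a = b := by
    intro a b h
    rcases lt_trichotomy a b with hc | hc | hc
    · exact absurd h (ne_of_gt (hvdec a b hc))
    · exact hc
    · exact absurd h (ne_of_lt (hvdec b a hc))
  -- each row has a nonzero entry
  have hrow : ∀ i, ∃ j, A i j ≠ 0 := by
    intro i
    by_contra h
    push_neg at h
    have h1 := congrFun (congrFun hAAt i) i
    rw [Matrix.mul_apply] at h1
    simp [h, Matrix.one_apply] at h1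
  -- define σ
  choose σ hσ using hrow
  have hveq : ∀ i, v' i = v (σ i) := fun i => hentry i (σ i) (hσ i)
  have hσmono : StrictMono σ := by
    intro a b hab
    have h1 : v (σ b) < v (σ a) := by rw [← hveq, ← hveq]; exact hvdec' a b hab
    rcases lt_trichotomy (σ a) (σ b) with hc | hc | hc
    · exact hc
    · rw [hc] at h1; exact absurd h1 (lt_irrefl _)
    · exact absurd h1 (not_lt.2 (le_of_lt (hvdec (σ b) (σ a) hc)))
  have hσid : σ = id := fin_strictMono_id hσmono
  have hvv' : ∀ i, v' i = v i := by intro i; rw [hveq i, hσid]; rfl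
  -- A off-diagonal zero
  have hoff : ∀ i j : Fin r, i ≠ j → A i j = 0 := by
    intro i j hij
    by_contra h
    have := hentry i j h
    rw [hvv'] at this
    exact hij (hvinj i j this)
  -- Aᵀ = A
  have hAt : Aᵀ = A := by
    ext i j
    by_cases h : i = j
    · rw [h]; rfl
    · rw [Matrix.transpose_apply, hoff j i (Ne.symm h), hoff i j h]
  have hAA : A * A = 1 := by have h := hAAt; rwa [hAt] at h
  refine ⟨A, hoff, ?_, ?_, ?_⟩
  · intro i
    have h1 := congrFun (congrFun hAA i) i
    rw [Matrix.mul_apply] at h1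
    have h2 : ∑ j, A i j * A j i = A i i * A i i := by
      rw [Finset.sum_eq_single i]
      · intro b _ hb; rw [hoff i b (Ne.symm hb), zero_mul]
      · intro hb; exact absurd (Finset.mem_univ i) hb
    rw [h2, Matrix.one_apply_eq] at h1
    exact mul_self_eq_one_iff.1 h1
  · rw [hFA, Matrix.mul_assoc, hAA, Matrix.mul_one]
  · have : Γ' = (A * Γᵀ)ᵀ := by rw [← hΓA, Matrix.transpose_transpose]
    rw [this, Matrix.transpose_mul, Matrix.transpose_transpose, hAt]
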